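/- arXiv:1706.06770 — 2 statements merged into one kernel-verified Lean document; each statement's English description precedes it below -/
import Mathlib

section
/- (Staircase Lemma) Let 𝒪 be an algebra of observables on a nonempty set Ω and let X, Y ∈ 𝒪^∞ with X ≤ Y pointwise. For each δ > 0 there exist n ≥ 1 and X₁, …, Xₙ, Y₁, …, Yₙ ∈ 𝒪 such that X = X₁ + ⋯ + Xₙ, Y = Y₁ + ⋯ + Yₙ, Xᵢ ∈ 𝒜_X ∩ 𝒜_{Xᵢ+Yᵢ} and Yᵢ ∈ 𝒜_Y ∩ 𝒜_{Xᵢ+Yᵢ} for each i, and Xᵢ ≤ Yᵢ + δ/n pointwise for each i. -/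
open Filter MeasureTheory Topology

variable {Ω : Type*}

/-- A family `𝒪` of real functions on `Ω` is an algebra of observables: for every `n ≥ 1`,
all `X₁, …, Xₙ ∈ 𝒪` and every `φ` continuous on the image of `(X₁, …, Xₙ)`,
the composite `ω ↦ φ (X₁ ω, …, Xₙ ω)` belongs to `𝒪`. -/
def IsObsAlg (o : Set (Ω → ℝ)) : Prop :=
  ∀ n : ℕ, 0 < n → ∀ X : Fin n → Ω → ℝ, (∀ i, X i ∈ o) →
    ∀ φ : (Fin n → ℝ) → ℝ,
      ContinuousOn φ (Set.range fun ω => fun i => X i ω) →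
      (fun ω => φ fun i => X i ω) ∈ o

/-- `F ⊆ Ω` is a zero set if `F = X⁻¹({0})` for some `X ∈ 𝒪`. -/
def IsZeroSet (o : Set (Ω → ℝ)) (F : Set Ω) : Prop :=
  ∃ X ∈ o, F = X ⁻¹' {0}

/-- A co-zero set is the complement of a zero set. -/
def IsCozeroSet (o : Set (Ω → ℝ)) (U : Set Ω) : Prop :=
  IsZeroSet o Uᶜ

/-- The observable sets are the zero sets together with the co-zero sets. -/
def IsObsSet (o : Set (Ω → ℝ)) (A : Set Ω) : Prop :=
  IsZeroSet o A ∨ IsCozeroSet o A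

/-- An observable probability: additive on disjoint observable sets with observable union,
nonnegative on observable sets, normalized, with monotone convergence along increasing
sequences of co-zero sets whose union is a co-zero set. -/
def IsObsProb (o : Set (Ω → ℝ)) (P : Set Ω → ℝ) : Prop :=
  (∀ A B : Set Ω, IsObsSet o A → IsObsSet o B → Disjoint A B →
    IsObsSet o (A ∪ B) → P (A ∪ B) = P A + P B) ∧
  (∀ A : Set Ω, IsObsSet o A → 0 ≤ P A) ∧
  (P Set.univ = 1) ∧
  (∀ (U : ℕ → Set Ω) (V : Set Ω), (∀ i, IsCozeroSet o (U i)) → Monotone U →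
    IsCozeroSet o V → (⋃ i, U i) = V →
    Tendsto (fun i => P (U i)) atTop (𝓝 (P V)))

/-- `μ` is the distribution of `X` under `P`: a Borel probability measure on `ℝ` with
`μ U = P (X ⁻¹' U)` for every open `U ⊆ ℝ`. -/
def IsDistribution (o : Set (Ω → ℝ)) (P : Set Ω → ℝ) (X : Ω → ℝ)
    (μ : Measure ℝ) : Prop :=
  IsProbabilityMeasure μ ∧
  ∀ U : Set ℝ, IsOpen U → μ U = ENNReal.ofReal (P (X ⁻¹' U))

/-- Membership in `𝒪^∞`: a bounded member of `𝒪`. -/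
def MemBdd (o : Set (Ω → ℝ)) (X : Ω → ℝ) : Prop :=
  X ∈ o ∧ ∃ M : ℝ, ∀ ω, |X ω| ≤ M

/-- The closed algebra `𝒜_X` generated by `X`: all `φ ∘ X` with `φ : ℝ → ℝ` continuous
(equivalent, by Tietze extension, to continuous functions on the closure of the image). -/
def ClosedAlg (X : Ω → ℝ) : Set (Ω → ℝ) :=
  {Y | ∃ φ : ℝ → ℝ, Continuous φ ∧ Y = φ ∘ X}

/-- Positivity of a functional on `𝒪^∞`. -/
def PositiveFunc (o : Set (Ω → ℝ)) (E : (Ω → ℝ) → ℝ) : Prop :=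
  ∀ X, MemBdd o X → (∀ ω, 0 ≤ X ω) → 0 ≤ E X

/-- Quasi-linearity: `E` is linear on each `𝒜_X`, `X ∈ 𝒪^∞`. -/
def QuasiLinear (o : Set (Ω → ℝ)) (E : (Ω → ℝ) → ℝ) : Prop :=
  ∀ X, MemBdd o X → ∀ Y ∈ ClosedAlg X, ∀ Z ∈ ClosedAlg X, ∀ a b : ℝ,
    E (fun ω => a * Y ω + b * Z ω) = a * E Y + b * E Z

/-- `X ⪯ U` : there is a zero set `F` with `X ≤ 1_F` pointwise and `F ⊆ U`. -/
def PrecU (o : Set (Ω → ℝ)) (X : Ω → ℝ) (U : Set Ω) : Prop :=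
  ∃ F : Set Ω, IsZeroSet o F ∧ (∀ ω, X ω ≤ F.indicator (fun _ => (1:ℝ)) ω) ∧ F ⊆ U

/-- An observable expectation: quasi-linear, positive, normalized, with monotone
convergence along increasing sequences in `𝒪^∞` converging pointwise in `𝒪^∞`. -/
def IsObsExp (o : Set (Ω → ℝ)) (E : (Ω → ℝ) → ℝ) : Prop :=
  QuasiLinear o E ∧ PositiveFunc o E ∧ E (fun _ => 1) = 1 ∧
  (∀ (X : ℕ → Ω → ℝ) (Y : Ω → ℝ), (∀ n, MemBdd o (X n)) → MemBdd o Y →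
    (∀ n ω, X n ω ≤ X (n+1) ω) →
    (∀ ω, Tendsto (fun n => X n ω) atTop (𝓝 (Y ω))) →
    Tendsto (fun n => E (X n)) atTop (𝓝 (E Y)))

/-- A quasi-additive probability: axioms (I)-(III) of an observable probability
together with inner regularity (IV'): `P U = sup {P F : F zero set, F ⊆ U}`. -/
def IsQuasiAddProb (o : Set (Ω → ℝ)) (P : Set Ω → ℝ) : Prop :=
  (∀ A B : Set Ω, IsObsSet o A → IsObsSet o B → Disjoint A B →
    IsObsSet o (A ∪ B) → P (A ∪ B) = P A + P B) ∧
  (∀ A : Set Ω, IsObsSet o A → 0 ≤ P A) ∧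
  (P Set.univ = 1) ∧
  (∀ U : Set Ω, IsCozeroSet o U →
    P U = sSup {r | ∃ F : Set Ω, IsZeroSet o F ∧ F ⊆ U ∧ r = P F})

lemma comp_mem {o : Set (Ω → ℝ)} (hO : IsObsAlg o) {X : Ω → ℝ} (hXo : X ∈ o)
    {φ : ℝ → ℝ} (hφ : Continuous φ) : (fun ω => φ (X ω)) ∈ o := by
  have := hO 1 one_pos (fun _ => X) (fun _ => hXo) (fun v => φ (v 0))
    ((hφ.comp (continuous_apply 0)).continuousOn)
  simpa using this

lemma sum_clamp (x b h : ℝ) (hb : b ≤ x) (hh : 0 ≤ h) :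
    ∀ n : ℕ, ∑ k ∈ Finset.range n,
      (min (max x (b + (k:ℝ)*h)) (b + ((k:ℝ)+1)*h) - (b + (k:ℝ)*h))
        = min x (b + (n:ℝ)*h) - b := by
  intro n
  induction n with
  | zero => simp [min_eq_right hb]
  | succ n ih =>
    rw [Finset.sum_range_succ, ih]
    push_cast
    rcases le_total x (b + (n:ℝ)*h) with h1 | h1 <;>
      simp only [min_def, max_def] <;> split_ifs <;> linarith

lemma pair_facts {u v p q r δ a b : ℝ} (hδ : 0 < δ) (huv : u ≤ v)
    (hq : q = p + δ) (hr : r = p - δ)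
    (ha : a = min (max u p) q - p) (hb : b = min (max v r) p - r) :
    a ≤ b ∧ a = max (a + b - δ) 0 ∧ b = min (a + b) δ := by
  subst hq hr ha hb
  simp only [min_def, max_def]
  split_ifs <;> refine ⟨by linarith, by linarith, by linarith⟩

set_option maxHeartbeats 1000000 in
/-- Staircase Lemma. -/
theorem staircase_lemma {Ω : Type*} [Nonempty Ω]
    (o : Set (Ω → ℝ)) (hO : IsObsAlg o)
    (X Y : Ω → ℝ) (hX : MemBdd o X) (hY : MemBdd o Y)
    (hXY : ∀ ω, X ω ≤ Y ω) (δ : ℝ) (hδ : 0 < δ) :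
    ∃ n : ℕ, 0 < n ∧ ∃ Xs Ys : Fin n → Ω → ℝ,
      (∀ i, Xs i ∈ o) ∧ (∀ i, Ys i ∈ o) ∧
      (∀ ω, X ω = ∑ i, Xs i ω) ∧ (∀ ω, Y ω = ∑ i, Ys i ω) ∧
      (∀ i, Xs i ∈ ClosedAlg X ∧ Xs i ∈ ClosedAlg (fun ω => Xs i ω + Ys i ω)) ∧
      (∀ i, Ys i ∈ ClosedAlg Y ∧ Ys i ∈ ClosedAlg (fun ω => Xs i ω + Ys i ω)) ∧
      (∀ i ω, Xs i ω ≤ Ys i ω + δ / n) := by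
  obtain ⟨hXo, MX, hMX⟩ := hX
  obtain ⟨hYo, MY, hMY⟩ := hY
  set C : ℝ := max MX MY with hCdef
  have hXb : ∀ ω, -C ≤ X ω ∧ X ω ≤ C := fun ω => by
    have := (abs_le.mp ((hMX ω).trans (le_max_left MX MY)))
    exact this
  have hYb : ∀ ω, -C ≤ Y ω ∧ Y ω ≤ C := fun ω => by
    have := (abs_le.mp ((hMY ω).trans (le_max_right MX MY)))
    exact this
  have hC0 : 0 ≤ C := le_trans (abs_nonneg _) ((hMX (Classical.arbitrary Ω)).trans (le_max_left MX MY))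
  obtain ⟨N, hNge⟩ := exists_nat_ge ((2*C)/δ)
  have hN : 2*C ≤ (N:ℝ) * δ := by
    calc 2*C = ((2*C)/δ) * δ := by field_simp
    _ ≤ (N:ℝ)*δ := by nlinarith
  set n : ℕ := N + 1 with hndef
  have hn0 : 0 < n := Nat.succ_pos N
  have hnδ : (0:ℝ) < (n:ℝ) := by positivity
  -- grid and constants
  set c : ℕ → ℝ := fun k => if k = 0 then -C else 0 with hcdef
  refine ⟨n, hn0,
    (fun i ω => min (max (X ω) (-C + ((i:ℕ):ℝ)*δ)) (-C + (((i:ℕ):ℝ)+1)*δ)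
        - (-C + ((i:ℕ):ℝ)*δ) + c i),
    (fun i ω => min (max (Y ω) ((-C + ((i:ℕ):ℝ)*δ) - δ)) (-C + ((i:ℕ):ℝ)*δ)
        - ((-C + ((i:ℕ):ℝ)*δ) - δ) + (c i - δ/n)), ?_, ?_, ?_, ?_, ?_, ?_, ?_⟩
  · intro i
    exact comp_mem hO hXo (by continuity :
      Continuous (fun x : ℝ => min (max x (-C + ((i:ℕ):ℝ)*δ)) (-C + (((i:ℕ):ℝ)+1)*δ)
        - (-C + ((i:ℕ):ℝ)*δ) + c i))
  · intro i
    exact comp_mem hO hYo (by continuity :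
      Continuous (fun y : ℝ => min (max y ((-C + ((i:ℕ):ℝ)*δ) - δ)) (-C + ((i:ℕ):ℝ)*δ)
        - ((-C + ((i:ℕ):ℝ)*δ) - δ) + (c i - δ/n)))
  · -- sum for X
    intro ω
    rw [Fin.sum_univ_eq_sum_range
      (fun k : ℕ => min (max (X ω) (-C + (k:ℝ)*δ)) (-C + ((k:ℝ)+1)*δ) - (-C + (k:ℝ)*δ) + c k) n]
    rw [Finset.sum_add_distrib]
    have h1 := sum_clamp (X ω) (-C) δ (hXb ω).1 hδ.le n
    have h2 : ∑ k ∈ Finset.range n, c k = -C := by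
      rw [hcdef]
      rw [Finset.sum_ite_eq' (Finset.range n) 0 (fun _ => -C)]
      simp [hn0]
    have h3 : min (X ω) (-C + (n:ℝ)*δ) = X ω := by
      apply min_eq_left
      have : (N:ℝ)*δ ≤ (n:ℝ)*δ := by
        have : (N:ℝ) ≤ (n:ℝ) := by rw [hndef]; push_cast; linarith
        nlinarith
      have := (hXb ω).2
      linarith
    rw [h1, h2, h3]; ring
  · -- sum for Y
    intro ω
    rw [Fin.sum_univ_eq_sum_range
      (fun k : ℕ => min (max (Y ω) ((-C + (k:ℝ)*δ) - δ)) (-C + (k:ℝ)*δ)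
          - ((-C + (k:ℝ)*δ) - δ) + (c k - δ/n)) n]
    rw [Finset.sum_add_distrib]
    have hre : ∀ k ∈ Finset.range n,
        (min (max (Y ω) ((-C + (k:ℝ)*δ) - δ)) (-C + (k:ℝ)*δ) - ((-C + (k:ℝ)*δ) - δ))
        = (min (max (Y ω) ((-C - δ) + (k:ℝ)*δ)) ((-C - δ) + ((k:ℝ)+1)*δ) - ((-C - δ) + (k:ℝ)*δ)) := by
      intro k _
      have e1 : (-C + (k:ℝ)*δ) - δ = (-C - δ) + (k:ℝ)*δ := by ring
      have e2 : (-C + (k:ℝ)*δ) = (-C - δ) + ((k:ℝ)+1)*δ := by ring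
      rw [e1, e2]
    rw [Finset.sum_congr rfl hre]
    have h1 := sum_clamp (Y ω) (-C - δ) δ (by linarith [(hYb ω).1]) hδ.le n
    have h2 : ∑ k ∈ Finset.range n, (c k - δ/n) = -C - δ := by
      rw [Finset.sum_sub_distrib]
      have h2a : ∑ k ∈ Finset.range n, c k = -C := by
        rw [hcdef]
        rw [Finset.sum_ite_eq' (Finset.range n) 0 (fun _ => -C)]
        simp [hn0]
      rw [h2a, Finset.sum_const, Finset.card_range, nsmul_eq_mul]
      rw [mul_div_cancel₀ _ (ne_of_gt hnδ)]
    have h3 : min (Y ω) ((-C - δ) + (n:ℝ)*δ) = Y ω := by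
      apply min_eq_left
      have hnn : (n:ℝ) = (N:ℝ) + 1 := by rw [hndef]; push_cast; ring
      have := (hYb ω).2
      rw [hnn]; nlinarith
    rw [h1, h2, h3]; ring
  · -- Xs ∈ ClosedAlg X and ClosedAlg (sum)
    intro i
    constructor
    · exact ⟨fun x => min (max x (-C + ((i:ℕ):ℝ)*δ)) (-C + (((i:ℕ):ℝ)+1)*δ)
        - (-C + ((i:ℕ):ℝ)*δ) + c i, by continuity, rfl⟩
    · refine ⟨fun s => max (s - (c i + (c i - δ/n)) - δ) 0 + c i, by continuity, ?_⟩
      funext ω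
      obtain ⟨hab, hfa, hfb⟩ := pair_facts (u := X ω) (v := Y ω) (p := -C + ((i:ℕ):ℝ)*δ)
        (q := -C + (((i:ℕ):ℝ)+1)*δ) (r := (-C + ((i:ℕ):ℝ)*δ) - δ)
        (a := min (max (X ω) (-C + ((i:ℕ):ℝ)*δ)) (-C + (((i:ℕ):ℝ)+1)*δ) - (-C + ((i:ℕ):ℝ)*δ))
        (b := min (max (Y ω) ((-C + ((i:ℕ):ℝ)*δ) - δ)) (-C + ((i:ℕ):ℝ)*δ) - ((-C + ((i:ℕ):ℝ)*δ) - δ))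
        hδ (hXY ω) (by ring) rfl rfl rfl
      simp only [Function.comp]
      set a := min (max (X ω) (-C + ((i:ℕ):ℝ)*δ)) (-C + (((i:ℕ):ℝ)+1)*δ) - (-C + ((i:ℕ):ℝ)*δ)
      set b := min (max (Y ω) ((-C + ((i:ℕ):ℝ)*δ) - δ)) (-C + ((i:ℕ):ℝ)*δ)
        - ((-C + ((i:ℕ):ℝ)*δ) - δ)
      rw [show a + c i + (b + (c i - δ/n)) - (c i + (c i - δ/n)) - δ = a + b - δ by ring, ← hfa]
  · -- Ys ∈ ClosedAlg Y and ClosedAlg (sum)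
    intro i
    constructor
    · exact ⟨fun y => min (max y ((-C + ((i:ℕ):ℝ)*δ) - δ)) (-C + ((i:ℕ):ℝ)*δ)
        - ((-C + ((i:ℕ):ℝ)*δ) - δ) + (c i - δ/n), by continuity, rfl⟩
    · refine ⟨fun s => min (s - (c i + (c i - δ/n))) δ + (c i - δ/n), by continuity, ?_⟩
      funext ω
      obtain ⟨hab, hfa, hfb⟩ := pair_facts (u := X ω) (v := Y ω) (p := -C + ((i:ℕ):ℝ)*δ)
        (q := -C + (((i:ℕ):ℝ)+1)*δ) (r := (-C + ((i:ℕ):ℝ)*δ) - δ)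
        (a := min (max (X ω) (-C + ((i:ℕ):ℝ)*δ)) (-C + (((i:ℕ):ℝ)+1)*δ) - (-C + ((i:ℕ):ℝ)*δ))
        (b := min (max (Y ω) ((-C + ((i:ℕ):ℝ)*δ) - δ)) (-C + ((i:ℕ):ℝ)*δ) - ((-C + ((i:ℕ):ℝ)*δ) - δ))
        hδ (hXY ω) (by ring) rfl rfl rfl
      simp only [Function.comp]
      set a := min (max (X ω) (-C + ((i:ℕ):ℝ)*δ)) (-C + (((i:ℕ):ℝ)+1)*δ) - (-C + ((i:ℕ):ℝ)*δ)
      set b := min (max (Y ω) ((-C + ((i:ℕ):ℝ)*δ) - δ)) (-C + ((i:ℕ):ℝ)*δ)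
        - ((-C + ((i:ℕ):ℝ)*δ) - δ)
      rw [show a + c i + (b + (c i - δ/n)) - (c i + (c i - δ/n)) = a + b by ring, ← hfb]
  · -- inequality
    intro i ω
    obtain ⟨hab, hfa, hfb⟩ := pair_facts (u := X ω) (v := Y ω) (p := -C + ((i:ℕ):ℝ)*δ)
      (q := -C + (((i:ℕ):ℝ)+1)*δ) (r := (-C + ((i:ℕ):ℝ)*δ) - δ)
      (a := min (max (X ω) (-C + ((i:ℕ):ℝ)*δ)) (-C + (((i:ℕ):ℝ)+1)*δ) - (-C + ((i:ℕ):ℝ)*δ))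
      (b := min (max (Y ω) ((-C + ((i:ℕ):ℝ)*δ) - δ)) (-C + ((i:ℕ):ℝ)*δ) - ((-C + ((i:ℕ):ℝ)*δ) - δ))
      hδ (hXY ω) (by ring) rfl rfl rfl
    beta_reduce
    set a := min (max (X ω) (-C + ((i:ℕ):ℝ)*δ)) (-C + (((i:ℕ):ℝ)+1)*δ) - (-C + ((i:ℕ):ℝ)*δ)
    set b := min (max (Y ω) ((-C + ((i:ℕ):ℝ)*δ) - δ)) (-C + ((i:ℕ):ℝ)*δ)
      - ((-C + ((i:ℕ):ℝ)*δ) - δ)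
    clear_value a b
    have hring : b + (c i - δ/(n:ℝ)) + δ/(n:ℝ) = b + c i := by ring
    calc a + c i ≤ b + c i := by linarith
    _ = b + (c i - δ/(n:ℝ)) + δ/(n:ℝ) := hring.symm
end

section
/- Let 𝒪 be an algebra of observables on a nonempty set Ω, P an observable probability, F a zero set, U a co-zero set, and X ∈ 𝒪 with 1_F ≤ X ≤ 1_U pointwise. Then X is integrable and P(F) ≤ ∫ X dP ≤ P(U). -/
open Filter MeasureTheory Topology

variable {Ω : Type*}

/-! Since `0 ≤ X ≤ 1`, the distribution of `X` lives on `[0, 1]` and the layer-cake formula gives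
`∫ t ∂μ = ∫₀¹ P {X > s} ds`. For `0 < s < 1` the co-zero set `{X > s}` contains `F` and lies in
the zero set `{X ≥ s} ⊆ U`; additivity and positivity of `P` make it monotone along such
zero/co-zero inclusions, so `P F ≤ P {X > s} ≤ P U` and integrating over `s` finishes. -/

open Set

namespace IsObsAlg

variable {o : Set (Ω → ℝ)} {X Y : Ω → ℝ}

theorem comp_mem (hO : IsObsAlg o) (hX : X ∈ o) {ψ : ℝ → ℝ} (hψ : Continuous ψ) :
    ψ ∘ X ∈ o :=
  hO 1 one_pos (fun _ => X) (fun _ => hX) (fun v => ψ (v 0))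
    (hψ.comp (continuous_apply 0)).continuousOn

theorem comp₂_mem (hO : IsObsAlg o) (hX : X ∈ o) (hY : Y ∈ o) {ψ : ℝ → ℝ → ℝ}
    (hψ : Continuous (Function.uncurry ψ)) : (fun ω => ψ (X ω) (Y ω)) ∈ o := by
  simpa using hO 2 two_pos ![X, Y] (Fin.forall_fin_two.2 ⟨hX, hY⟩) (fun v => ψ (v 0) (v 1))
    (hψ.comp (f := fun v : Fin 2 → ℝ => (v 0, v 1)) (by fun_prop)).continuousOn

theorem isZeroSet_empty (hO : IsObsAlg o) (hX : X ∈ o) : IsZeroSet o (∅ : Set Ω) :=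
  ⟨_, hO.comp_mem hX (ψ := fun _ => 1) continuous_const, by ext; simp⟩

theorem isZeroSet_union (hO : IsObsAlg o) {A B : Set Ω} (hA : IsZeroSet o A)
    (hB : IsZeroSet o B) : IsZeroSet o (A ∪ B) := by
  obtain ⟨Y, hY, rfl⟩ := hA
  obtain ⟨Z, hZ, rfl⟩ := hB
  exact ⟨_, hO.comp₂_mem hY hZ (ψ := (· * ·)) continuous_mul, by ext; simp⟩

theorem isZeroSet_inter (hO : IsObsAlg o) {A B : Set Ω} (hA : IsZeroSet o A)
    (hB : IsZeroSet o B) : IsZeroSet o (A ∩ B) := by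
  obtain ⟨Y, hY, rfl⟩ := hA
  obtain ⟨Z, hZ, rfl⟩ := hB
  refine ⟨_, hO.comp₂_mem hY hZ (ψ := fun a b => |a| + |b|) (by fun_prop), ?_⟩
  ext
  simp [add_eq_zero_iff_of_nonneg, abs_nonneg]

theorem isCozeroSet_preimage_Ioi (hO : IsObsAlg o) (hX : X ∈ o) (a : ℝ) :
    IsCozeroSet o (X ⁻¹' Ioi a) :=
  ⟨_, hO.comp_mem hX (ψ := fun t => max (t - a) 0) (by fun_prop), by ext; simp⟩

theorem isZeroSet_preimage_Ici (hO : IsObsAlg o) (hX : X ∈ o) (a : ℝ) :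
    IsZeroSet o (X ⁻¹' Ici a) :=
  ⟨_, hO.comp_mem hX (ψ := fun t => min (t - a) 0) (by fun_prop), by ext; simp⟩

end IsObsAlg

namespace IsObsProb

variable {o : Set (Ω → ℝ)} {P : Set Ω → ℝ}

theorem apply_empty (hO : IsObsAlg o) (hP : IsObsProb o P) {X : Ω → ℝ} (hX : X ∈ o) :
    P ∅ = 0 := by
  have hempty : IsObsSet o (∅ : Set Ω) := .inl (hO.isZeroSet_empty hX)
  have h := hP.1 ∅ ∅ hempty hempty (disjoint_empty _) (by rwa [union_empty])
  rw [union_empty] at h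
  linarith

theorem le_of_subset (hP : IsObsProb o P) {A B : Set Ω} (hA : IsObsSet o A)
    (hB : IsObsSet o B) (hBA : IsObsSet o (B \ A)) (hAB : A ⊆ B) : P A ≤ P B := by
  have h := hP.1 A (B \ A) hA hBA disjoint_sdiff_right (by rwa [union_sdiff_cancel hAB])
  rw [union_sdiff_cancel hAB] at h
  linarith [hP.2.1 _ hBA]

theorem le_of_isZeroSet_subset_isCozeroSet (hO : IsObsAlg o) (hP : IsObsProb o P)
    {F U : Set Ω} (hF : IsZeroSet o F) (hU : IsCozeroSet o U) (hFU : F ⊆ U) : P F ≤ P U := by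
  refine hP.le_of_subset (.inl hF) (.inr hU) (.inr ?_) hFU
  rw [IsCozeroSet, sdiff_eq, compl_inter, compl_compl, union_comm]
  exact hO.isZeroSet_union hF hU

theorem le_of_isCozeroSet_subset_isZeroSet (hO : IsObsAlg o) (hP : IsObsProb o P)
    {U F : Set Ω} (hU : IsCozeroSet o U) (hF : IsZeroSet o F) (hUF : U ⊆ F) : P U ≤ P F :=
  hP.le_of_subset (.inr hU) (.inl hF) (.inl (sdiff_eq F U ▸ hO.isZeroSet_inter hF hU)) hUF

end IsObsProb

namespace IsDistribution

variable {o : Set (Ω → ℝ)} {P : Set Ω → ℝ} {X : Ω → ℝ} {μ : Measure ℝ}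

theorem ae_mem (hO : IsObsAlg o) (hP : IsObsProb o P) (hX : X ∈ o)
    (hμ : IsDistribution o P X μ) {S : Set ℝ} (hS : IsClosed S) (hXS : ∀ ω, X ω ∈ S) :
    ∀ᵐ t ∂μ, t ∈ S := by
  change μ Sᶜ = 0
  rw [hμ.2 _ hS.isOpen_compl, preimage_compl, preimage_eq_univ_iff.2 (range_subset_iff.2 hXS),
    compl_univ, hP.apply_empty hO hX, ENNReal.ofReal_zero]

theorem measureReal_Ioi (hO : IsObsAlg o) (hP : IsObsProb o P) (hX : X ∈ o)
    (hμ : IsDistribution o P X μ) (a : ℝ) : μ.real (Ioi a) = P (X ⁻¹' Ioi a) := by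
  rw [measureReal_def, hμ.2 _ isOpen_Ioi,
    ENNReal.toReal_ofReal (hP.2.1 _ (.inr (hO.isCozeroSet_preimage_Ioi hX a)))]

end IsDistribution

section RealLine

variable {μ : Measure ℝ} [IsFiniteMeasure μ]

theorem integrable_id_of_ae_mem_of_isCompact {K : Set ℝ} (hK : IsCompact K)
    (h : ∀ᵐ t ∂μ, t ∈ K) : Integrable id μ := by
  obtain ⟨C, hC⟩ := hK.isBounded.exists_norm_le
  exact (integrable_const C).mono' aestronglyMeasurable_id (h.mono hC)

theorem integral_id_eq_setIntegral_Ioo_measureReal_Ioi {M : ℝ} (h : ∀ᵐ t ∂μ, t ∈ Icc 0 M) :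
    ∫ t, t ∂μ = ∫ s in Ioo 0 M, μ.real (Ioi s) := by
  rw [Integrable.integral_eq_integral_meas_lt (f := fun t => t)
    (integrable_id_of_ae_mem_of_isCompact isCompact_Icc h) (h.mono fun t ht => ht.1)]
  refine setIntegral_eq_of_subset_of_forall_sdiff_eq_zero measurableSet_Ioi Ioo_subset_Ioi_self
    fun s hs => (measureReal_eq_zero_iff (measure_ne_top _ _)).2 (measure_mono_null ?_ h)
  have hMs : M ≤ s := not_lt.1 fun hsM => hs.2 ⟨hs.1, hsM⟩
  exact fun t ht htM => (ht : s < t).not_ge (htM.2.trans hMs)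

theorem integral_id_mem_Icc_of_measureReal_Ioi_mem_Icc (h : ∀ᵐ t ∂μ, t ∈ Icc 0 1) {a b : ℝ}
    (hab : ∀ s ∈ Ioo 0 1, μ.real (Ioi s) ∈ Icc a b) : ∫ t, t ∂μ ∈ Icc a b := by
  have hint : IntegrableOn (fun s => μ.real (Ioi s)) (Ioo 0 1) :=
    (AntitoneOn.integrableOn_isCompact isCompact_Icc fun s _ t _ hst =>
      measureReal_mono (Ioi_subset_Ioi hst)).mono_set Ioo_subset_Icc_self
  rw [integral_id_eq_setIntegral_Ioo_measureReal_Ioi h]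
  constructor
  · simpa using setIntegral_ge_of_const_le_real measurableSet_Ioo (by simp)
      (fun s hs => (hab s hs).1) hint
  · simpa using setIntegral_mono_on hint (integrableOn_const (by simp)) measurableSet_Ioo
      fun s hs => (hab s hs).2

end RealLine

theorem prob_le_integral_le_prob_general {Ω : Type*}
    (o : Set (Ω → ℝ)) (hO : IsObsAlg o) (P : Set Ω → ℝ) (hP : IsObsProb o P)
    (F U : Set Ω) (hF : IsZeroSet o F) (hU : IsCozeroSet o U)
    (X : Ω → ℝ) (hX : X ∈ o)
    (h1 : ∀ ω, F.indicator (fun _ => (1:ℝ)) ω ≤ X ω)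
    (h2 : ∀ ω, X ω ≤ U.indicator (fun _ => (1:ℝ)) ω)
    (μ : Measure ℝ) (hμ : IsDistribution o P X μ) :
    Integrable id μ ∧ P F ≤ (∫ t, t ∂μ) ∧ (∫ t, t ∂μ) ≤ P U := by
  have := hμ.1
  have hX01 : ∀ ω, X ω ∈ Icc 0 1 := fun ω =>
    ⟨(indicator_nonneg (fun _ _ => zero_le_one) ω).trans (h1 ω),
      (h2 ω).trans (indicator_le_self' (fun _ _ => zero_le_one) ω)⟩
  have hF_sub {s : ℝ} (hs : s < 1) : F ⊆ X ⁻¹' Ioi s := fun ω hω =>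
    hs.trans_le (by simpa [hω] using h1 ω)
  have h_sub_U {s : ℝ} (hs : 0 < s) : X ⁻¹' Ici s ⊆ U := fun ω hω => by
    by_contra hωU
    exact hs.not_ge (hω.trans (by simpa [hωU] using h2 ω))
  have hsupp := hμ.ae_mem hO hP hX isClosed_Icc hX01
  refine ⟨integrable_id_of_ae_mem_of_isCompact isCompact_Icc hsupp,
    integral_id_mem_Icc_of_measureReal_Ioi_mem_Icc hsupp fun s hs => ?_⟩
  have hV := hO.isCozeroSet_preimage_Ioi hX s
  have hZ := hO.isZeroSet_preimage_Ici hX s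
  rw [hμ.measureReal_Ioi hO hP hX]
  exact ⟨hP.le_of_isZeroSet_subset_isCozeroSet hO hF hV (hF_sub hs.2),
    (hP.le_of_isCozeroSet_subset_isZeroSet hO hV hZ (preimage_mono Ioi_subset_Ici_self)).trans
      (hP.le_of_isZeroSet_subset_isCozeroSet hO hZ hU (h_sub_U hs.1))⟩

/-- if `1_F ≤ X ≤ 1_U` then `X` is integrable and
`P F ≤ ∫ X dP ≤ P U`. -/
theorem prob_le_integral_le_prob {Ω : Type*} [Nonempty Ω]
    (o : Set (Ω → ℝ)) (hO : IsObsAlg o) (P : Set Ω → ℝ) (hP : IsObsProb o P)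
    (F U : Set Ω) (hF : IsZeroSet o F) (hU : IsCozeroSet o U)
    (X : Ω → ℝ) (hX : X ∈ o)
    (h1 : ∀ ω, F.indicator (fun _ => (1:ℝ)) ω ≤ X ω)
    (h2 : ∀ ω, X ω ≤ U.indicator (fun _ => (1:ℝ)) ω)
    (μ : Measure ℝ) (hμ : IsDistribution o P X μ) :
    Integrable id μ ∧ P F ≤ (∫ t, t ∂μ) ∧ (∫ t, t ∂μ) ≤ P U :=
  prob_le_integral_le_prob_general o hO P hP F U hF hU X hX h1 h2 μ hμ
end
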